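/- arXiv:2005.01673 — 3 statements merged into one kernel-verified Lean document; each statement's English description precedes it below -/
import Mathlib

section
/- There exists a linear system with convex input constraints, a convex target set R, and points x1, x2 each of which is steered to R in (possibly different) finite numbers of steps k1 ≠ k2 under feasible inputs, such that some convex combination of x1 and x2 cannot be steered to R in any finite number of steps. Equivalently, the union over k of the k-step controllable sets to R need not be convex. -/
/-! With no input available the `k`-step set is the preimage of `R` under `A ^ k`. For the scalar
system `x ↦ 2 x` with target `{1}` this is `{2⁻ᵏ}`, so the union over `k` contains `1` and `1/2`
but not their midpoint `3/4`, since `2 ^ k * 3 = 4` has no solution. -/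

/-- The `k`-step controllable set without state constraints:
`K 0 = R`, `K (j+1) = {x : ∃ u ∈ U, Ax + Bu ∈ K j}`. -/
def ctrlSetFree {n m : ℕ} (A : Matrix (Fin n) (Fin n) ℝ) (B : Matrix (Fin n) (Fin m) ℝ)
    (U : Set (Fin m → ℝ)) (R : Set (Fin n → ℝ)) : ℕ → Set (Fin n → ℝ)
  | 0 => R
  | j + 1 => {x : Fin n → ℝ | ∃ u ∈ U, A.mulVec x + B.mulVec u ∈ ctrlSetFree A B U R j}

open Matrix Set

theorem ctrlSetFree_singleton_zero {n m : ℕ} (A : Matrix (Fin n) (Fin n) ℝ)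
    (B : Matrix (Fin n) (Fin m) ℝ) (R : Set (Fin n → ℝ)) (k : ℕ) :
    ctrlSetFree A B {0} R k = {x | (A ^ k) *ᵥ x ∈ R} := by
  induction k with
  | zero => ext x; simp [ctrlSetFree]
  | succ k ih => ext x; simp [ctrlSetFree, ih, pow_succ, mulVec_mulVec]

theorem mem_ctrlSetFree_two_singleton_zero {m k : ℕ} (B : Matrix (Fin 1) (Fin m) ℝ)
    {x : Fin 1 → ℝ} :
    x ∈ ctrlSetFree 2 B {0} {y | y 0 = 1} k ↔ 2 ^ k * x 0 = 1 := by
  have hpow : (2 : Matrix (Fin 1) (Fin 1) ℝ) ^ k = ((2 ^ k : ℕ) : Matrix (Fin 1) (Fin 1) ℝ) := by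
    norm_cast
  rw [ctrlSetFree_singleton_zero, mem_ofPred_eq, hpow, natCast_mulVec]
  simp

theorem two_pow_mul_three_ne_four (k : ℕ) : (2 : ℝ) ^ k * 3 ≠ 4 := by
  intro h
  have h_nat : 2 ^ k * 3 = 4 := by exact_mod_cast h
  exact absurd (Dvd.intro_left _ h_nat) (by decide)

/-- there exists a linear system with convex input constraints and a convex
target `R` such that the union over `k` of the `k`-step controllable sets to `R` is not
convex. -/
theorem stmt7 :
    ∃ (n m : ℕ) (A : Matrix (Fin n) (Fin n) ℝ) (B : Matrix (Fin n) (Fin m) ℝ)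
      (U : Set (Fin m → ℝ)) (R : Set (Fin n → ℝ)),
      Convex ℝ U ∧ Convex ℝ R ∧
      ¬ Convex ℝ (⋃ k : ℕ, ctrlSetFree A B U R k) := by
  refine ⟨1, 1, 2, 0, {0}, {y | y 0 = 1}, convex_singleton 0,
    convex_hyperplane (LinearMap.proj 0).isLinear 1, fun hconv => ?_⟩
  have h_one :
      (1 : Fin 1 → ℝ) ∈ ⋃ k, ctrlSetFree 2 (0 : Matrix _ (Fin 1) ℝ) {0} {y | y 0 = 1} k :=
    mem_iUnion.2 ⟨0, by simp [mem_ctrlSetFree_two_singleton_zero]⟩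
  have h_half :
      (2⁻¹ : Fin 1 → ℝ) ∈ ⋃ k, ctrlSetFree 2 (0 : Matrix _ (Fin 1) ℝ) {0} {y | y 0 = 1} k :=
    mem_iUnion.2 ⟨1, by simp [mem_ctrlSetFree_two_singleton_zero]⟩
  obtain ⟨k, hk⟩ := mem_iUnion.1 <| hconv h_one h_half (by norm_num : (0 : ℝ) ≤ 2⁻¹)
    (by norm_num : (0 : ℝ) ≤ 2⁻¹) (by norm_num)
  rw [mem_ctrlSetFree_two_singleton_zero] at hk
  simp only [Pi.add_apply, Pi.smul_apply, Pi.inv_apply, Pi.ofNat_apply, smul_eq_mul,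
    mul_one] at hk
  exact two_pow_mul_three_ne_four k (by linarith)
end

section
/- Suppose for each k ∈ {0,...,K} the convex safe set CK_k is the convex hull of finitely many stored states, each stored state in CK_{k} has an associated stored input in U steering it (under the linear dynamics) to a stored state in CK_{k-1}, and all stored states lie in the convex constraint set X. Then every point x ∈ CK_K can be steered, with inputs in U and states in X at every step, to CK_0 in exactly K steps. -/
/-- if for each `k ∈ {0,…,K}` the convex safe set `CK_k` is the convex hull
of finitely many stored states, each stored state at level `k ≥ 1` has a stored input in
`U` steering it to the stored state at level `k-1`, and all stored states lie in the
convex set `X`, then every `x ∈ CK_K` can be steered, with inputs in `U` and states in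
`X` at every step, to `CK_0` in exactly `K` steps. -/
theorem stmt8 {n m J : ℕ}
    (A : Matrix (Fin n) (Fin n) ℝ) (B : Matrix (Fin n) (Fin m) ℝ)
    (X : Set (Fin n → ℝ)) (U : Set (Fin m → ℝ))
    (hX : Convex ℝ X) (hU : Convex ℝ U)
    (K : ℕ)
    (z : Fin J → ℕ → Fin n → ℝ) (w : Fin J → ℕ → Fin m → ℝ)
    (hzX : ∀ j, ∀ k ≤ K, z j k ∈ X)
    (hwU : ∀ j, ∀ k, 1 ≤ k → k ≤ K → w j k ∈ U)
    (hdyn : ∀ j, ∀ k, 1 ≤ k → k ≤ K →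
      A.mulVec (z j k) + B.mulVec (w j k) = z j (k - 1))
    (x : Fin n → ℝ)
    (hx : x ∈ convexHull ℝ (Set.range fun j => z j K)) :
    ∃ (xs : ℕ → Fin n → ℝ) (us : ℕ → Fin m → ℝ),
      xs 0 = x ∧
      (∀ t < K, xs (t + 1) = A.mulVec (xs t) + B.mulVec (us t)) ∧
      (∀ t ≤ K, xs t ∈ X) ∧
      (∀ t < K, us t ∈ U) ∧
      xs K ∈ convexHull ℝ (Set.range fun j => z j 0) := by
  rw [convexHull_range_eq_exists_affineCombination] at hx
  obtain ⟨s, c, hc0, hc1, hcx⟩ := hx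
  rw [Finset.affineCombination_eq_linear_combination _ _ _ hc1] at hcx
  refine ⟨fun t => ∑ j ∈ s, c j • z j (K - t), fun t => ∑ j ∈ s, c j • w j (K - t),
    by simpa using hcx, ?_, ?_, ?_, ?_⟩
  · intro t ht
    have h1 : 1 ≤ K - t := by omega
    have h2 : K - t ≤ K := by omega
    have h3 : K - (t + 1) = K - t - 1 := by omega
    beta_reduce
    rw [h3]
    have hA : A.mulVec (∑ j ∈ s, c j • z j (K - t)) = ∑ j ∈ s, c j • A.mulVec (z j (K - t)) := by
      have := map_sum A.mulVecLin (fun j => c j • z j (K - t)) s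
      simp only [Matrix.mulVecLin_apply, map_smul, Matrix.mulVecLin_apply] at this ⊢
      simpa using this
    have hB : B.mulVec (∑ j ∈ s, c j • w j (K - t)) = ∑ j ∈ s, c j • B.mulVec (w j (K - t)) := by
      have := map_sum B.mulVecLin (fun j => c j • w j (K - t)) s
      simp only [Matrix.mulVecLin_apply, map_smul, Matrix.mulVecLin_apply] at this ⊢
      simpa using this
    rw [hA, hB, ← Finset.sum_add_distrib]
    refine Finset.sum_congr rfl fun j hj => ?_
    rw [← smul_add, hdyn j (K - t) h1 h2]
  · intro t ht
    exact hX.sum_mem hc0 hc1 fun j hj => hzX j (K - t) (by omega)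
  · intro t ht
    exact hU.sum_mem hc0 hc1 fun j hj => hwU j (K - t) (by omega) (by omega)
  · rw [convexHull_range_eq_exists_affineCombination]
    exact ⟨s, c, hc0, hc1, by
      rw [Finset.affineCombination_eq_linear_combination _ _ _ hc1]; simp⟩
end

section
/- Consider two feasible executions of a task with linear dynamics and convex constraints that have different durations T1 < T2, both ending in a convex target set R. For any k ≤ T1, the convex combination of the states visited k steps before the end of each trajectory can be steered into R in exactly k steps using the convex combination of the corresponding time-aligned (from the end) inputs. -/
/-- for two feasible executions of different durations `T1 < T2`, both
ending in a convex target `R`, and any `k ≤ T1`, the convex combination of the states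
visited `k` steps before the end of each trajectory can be steered into `R` in exactly
`k` steps using the convex combination of the time-aligned (from the end) inputs. -/
theorem stmt11 {n m : ℕ}
    (A : Matrix (Fin n) (Fin n) ℝ) (B : Matrix (Fin n) (Fin m) ℝ)
    (X : Set (Fin n → ℝ)) (U : Set (Fin m → ℝ))
    (hX : Convex ℝ X) (hU : Convex ℝ U)
    (R : Set (Fin n → ℝ)) (hR : Convex ℝ R) (hRX : R ⊆ X)
    (T1 T2 : ℕ) (hT : T1 < T2)
    (x1 x2 : ℕ → Fin n → ℝ) (u1 u2 : ℕ → Fin m → ℝ)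
    (hdyn1 : ∀ t < T1, x1 (t + 1) = A.mulVec (x1 t) + B.mulVec (u1 t))
    (hdyn2 : ∀ t < T2, x2 (t + 1) = A.mulVec (x2 t) + B.mulVec (u2 t))
    (hx1X : ∀ t ≤ T1, x1 t ∈ X) (hx2X : ∀ t ≤ T2, x2 t ∈ X)
    (hu1U : ∀ t < T1, u1 t ∈ U) (hu2U : ∀ t < T2, u2 t ∈ U)
    (hend1 : x1 T1 ∈ R) (hend2 : x2 T2 ∈ R)
    (k : ℕ) (hk : k ≤ T1)
    (lam : ℝ) (hlam : lam ∈ Set.Icc (0 : ℝ) 1) :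
    ∃ xs : ℕ → Fin n → ℝ,
      xs 0 = lam • x1 (T1 - k) + (1 - lam) • x2 (T2 - k) ∧
      (∀ t < k, xs (t + 1) =
        A.mulVec (xs t) +
          B.mulVec (lam • u1 (T1 - k + t) + (1 - lam) • u2 (T2 - k + t))) ∧
      (∀ t ≤ k, xs t ∈ X) ∧
      (∀ t < k, lam • u1 (T1 - k + t) + (1 - lam) • u2 (T2 - k + t) ∈ U) ∧
      xs k ∈ R := by

  obtain ⟨h0, h1⟩ := hlam
  refine ⟨fun t => lam • x1 (T1 - k + t) + (1 - lam) • x2 (T2 - k + t), by simp, ?_, ?_, ?_, ?_⟩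
  · intro t ht
    have e1 : T1 - k + (t + 1) = (T1 - k + t) + 1 := by omega
    have e2 : T2 - k + (t + 1) = (T2 - k + t) + 1 := by omega
    beta_reduce
    rw [e1, e2, hdyn1 _ (by omega), hdyn2 _ (by omega)]
    simp [Matrix.mulVec_add, Matrix.mulVec_smul, smul_add]
    abel
  · intro t ht
    exact hX (hx1X _ (by omega)) (hx2X _ (by omega)) h0 (by linarith) (by ring)
  · intro t ht
    exact hU (hu1U _ (by omega)) (hu2U _ (by omega)) h0 (by linarith) (by ring)
  · have e1 : T1 - k + k = T1 := by omega
    have e2 : T2 - k + k = T2 := by omega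
    beta_reduce
    rw [e1, e2]
    exact hR hend1 hend2 h0 (by linarith) (by ring)
end
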